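/- Let G be a finite simple graph with n vertices. Then Σ_{S ∈ D(G)} |a(S)| = 2·Σ_{S ∈ D(G)} |S| − n·|D(G)| (equivalently, Σ_{S ∈ D(G)} |a(S)| = 2D'(G,1) − nD(G,1), where D(G,x) is the domination polynomial of G). -/

import Mathlib

/-!
Call `v ∈ S` redundant in a dominating set `S` if `S \ {v}` is still dominating. Since
supersets of dominating sets dominate, `S ↦ S \ {v}` is a bijection from the dominating
sets in which `v` is redundant onto the dominating sets avoiding `v`. Double counting the
pairs `(S, v)` with `v` redundant in `S` therefore gives `∑ |S \ a(S)| = ∑ (n - |S|)`,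
which rearranges to the claimed identity.
-/

open Finset

/-- `S` is a dominating set of `G`: every vertex is in `S` or adjacent to a vertex of `S`. -/
def SimpleGraph.IsDomSet {V : Type*} (G : SimpleGraph V) (S : Finset V) : Prop :=
  ∀ v : V, v ∈ S ∨ ∃ u ∈ S, G.Adj u v

/-- The family of all dominating sets of `G`. -/
noncomputable def SimpleGraph.domSets {V : Type*} [Fintype V] (G : SimpleGraph V) :
    Finset (Finset V) :=
  @Finset.filter _ (fun S => G.IsDomSet S) (Classical.decPred _) Finset.univ

/-- The average order (cardinality) of a dominating set of `G`. -/
noncomputable def SimpleGraph.avd {V : Type*} [Fintype V] (G : SimpleGraph V) : ℝ :=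
  (∑ S ∈ G.domSets, (S.card : ℝ)) / (G.domSets).card
/-- The set of critical vertices of a dominating set `S`: those `v ∈ S` whose removal
makes `S` no longer dominating. -/
noncomputable def SimpleGraph.critSet {V : Type*} [DecidableEq V] (G : SimpleGraph V)
    (S : Finset V) : Finset V :=
  @Finset.filter _ (fun v => ¬ G.IsDomSet (S.erase v)) (Classical.decPred _) S

namespace Finset

variable {α : Type*} [DecidableEq α] {𝒟 : Finset (Finset α)}

theorem card_filter_mem_erase_mem_eq_card_filter_notMem
    (h𝒟 : IsUpperSet (𝒟 : Set (Finset α))) (v : α) :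
    #{S ∈ 𝒟 | v ∈ S ∧ S.erase v ∈ 𝒟} = #{T ∈ 𝒟 | v ∉ T} := by
  refine card_bij' (fun S _ => S.erase v) (fun T _ => insert v T) ?_ ?_ ?_ ?_
  · intro S hS
    simp only [mem_filter] at hS ⊢
    exact ⟨hS.2.2, notMem_erase v S⟩
  · intro T hT
    simp only [mem_filter] at hT ⊢
    refine ⟨h𝒟 (subset_insert v T) hT.1, mem_insert_self v T, ?_⟩
    rw [erase_insert hT.2]
    exact hT.1
  · intro S hS
    exact insert_erase (mem_filter.1 hS).2.1
  · intro T hT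
    exact erase_insert (mem_filter.1 hT).2

theorem sum_card_filter_erase_mem [Fintype α] (h𝒟 : IsUpperSet (𝒟 : Set (Finset α))) :
    ∑ S ∈ 𝒟, #{v ∈ S | S.erase v ∈ 𝒟} = ∑ T ∈ 𝒟, #Tᶜ := by
  calc ∑ S ∈ 𝒟, #{v ∈ S | S.erase v ∈ 𝒟}
      = ∑ S ∈ 𝒟, ∑ v, if v ∈ S ∧ S.erase v ∈ 𝒟 then 1 else 0 := by
        refine sum_congr rfl fun S _ => ?_
        rw [← card_filter, ← filter_filter, filter_univ_mem]
    _ = ∑ v, #{S ∈ 𝒟 | v ∈ S ∧ S.erase v ∈ 𝒟} := by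
        rw [sum_comm]
        simp only [card_filter]
    _ = ∑ v, #{T ∈ 𝒟 | v ∉ T} :=
        sum_congr rfl fun v _ => card_filter_mem_erase_mem_eq_card_filter_notMem h𝒟 v
    _ = ∑ T ∈ 𝒟, #Tᶜ := by
        simp only [card_filter]
        rw [sum_comm]
        refine sum_congr rfl fun T _ => ?_
        rw [← card_filter, filter_notMem_eq_sdiff, compl_eq_univ_sdiff]

end Finset

namespace SimpleGraph

variable {V : Type*}

theorem IsDomSet.mono {G : SimpleGraph V} {S T : Finset V} (h : G.IsDomSet S) (hST : S ⊆ T) :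
    G.IsDomSet T := fun v =>
  (h v).imp (fun hv => hST hv) fun ⟨u, hu, ha⟩ => ⟨u, hST hu, ha⟩

variable [Fintype V] (G : SimpleGraph V)

@[simp]
theorem mem_domSets {S : Finset V} : S ∈ G.domSets ↔ G.IsDomSet S := by
  simp [domSets]

theorem isUpperSet_domSets : IsUpperSet (G.domSets : Set (Finset V)) :=
  fun _ _ hST hS => (G.mem_domSets).2 (((G.mem_domSets).1 hS).mono hST)

variable [DecidableEq V]

theorem critSet_eq_filter (S : Finset V) : G.critSet S = {v ∈ S | S.erase v ∉ G.domSets} := by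
  ext v
  simp [critSet]

theorem card_critSet_add_card_filter_erase_mem (S : Finset V) :
    #(G.critSet S) + #{v ∈ S | S.erase v ∈ G.domSets} = #S := by
  rw [critSet_eq_filter, add_comm]
  exact card_filter_add_card_filter_not _

theorem sum_card_critSet_add_card_mul_card_domSets :
    ∑ S ∈ G.domSets, #(G.critSet S) + Fintype.card V * #G.domSets
      = 2 * ∑ S ∈ G.domSets, #S := by
  have hcrit := sum_congr rfl fun S (_ : S ∈ G.domSets) =>
    G.card_critSet_add_card_filter_erase_mem S
  have hcompl := sum_congr rfl fun T (_ : T ∈ G.domSets) => card_compl_add_card T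
  rw [sum_add_distrib, sum_card_filter_erase_mem G.isUpperSet_domSets] at hcrit
  rw [sum_add_distrib, sum_const, smul_eq_mul] at hcompl
  linarith

end SimpleGraph

/-- For a graph `G` with `n` vertices,
`Σ_{S ∈ D(G)} |a(S)| = 2·Σ_{S ∈ D(G)} |S| − n·|D(G)|`. -/
theorem sum_critSet_card {V : Type*} [Fintype V] [DecidableEq V] (G : SimpleGraph V)
    (n : ℕ) (hn : n = Fintype.card V) :
    (∑ S ∈ G.domSets, ((G.critSet S).card : ℝ)) =
      2 * (∑ S ∈ G.domSets, (S.card : ℝ)) - (n : ℝ) * (G.domSets).card := by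
  have h := congrArg (Nat.cast : ℕ → ℝ) G.sum_card_critSet_add_card_mul_card_domSets
  push_cast at h
  rw [hn]
  linarith
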